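/- arXiv:1805.11691 — 9 statements merged into one kernel-verified Lean document; each statement's English description precedes it below -/
import Mathlib

section
/- If G and G' are finite groups with coprime orders, then σ₃(G × G') = σ₃(G) · σ₃(G'), where σ₃(G) = ∑_{H ⊴ G} |H|/|G|. -/
lemma pow_pow_eq_self {G : Type*} [Group G] [Finite G] {n : ℕ}
    (h : Nat.Coprime (Nat.card G) n) (a : G) : ∃ y : ℤ, (a ^ n) ^ y = a := by
  refine ⟨Nat.gcdB (Nat.card G) n, ?_⟩
  have hb : ((Nat.gcd (Nat.card G) n : ℕ) : ℤ) = (Nat.card G) * Nat.gcdA (Nat.card G) n + n * Nat.gcdB (Nat.card G) n := Nat.gcd_eq_gcd_ab _ _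
  rw [h.gcd_eq_one] at hb
  calc (a ^ n) ^ (Nat.gcdB (Nat.card G) n : ℤ)
      = a ^ ((Nat.card G : ℤ) * Nat.gcdA (Nat.card G) n + n * Nat.gcdB (Nat.card G) n) := by
        rw [zpow_add, zpow_mul, zpow_mul, zpow_natCast, zpow_natCast, pow_card_eq_one', one_zpow, one_mul]
    _ = a := by rw [← hb]; simp

lemma subgroup_eq_prod {G G' : Type*} [Group G] [Group G'] [Finite G] [Finite G']
    (h : Nat.Coprime (Nat.card G) (Nat.card G')) (H : Subgroup (G × G')) :
    H = (H.map (MonoidHom.fst G G')).prod (H.map (MonoidHom.snd G G')) := by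
  apply le_antisymm
  · intro x hx
    exact ⟨⟨x, hx, rfl⟩, ⟨x, hx, rfl⟩⟩
  · rintro ⟨a, b⟩ ⟨⟨⟨a', b'⟩, hab', rfl⟩, ⟨⟨a'', b''⟩, hab'', rfl⟩⟩
    simp only [MonoidHom.coe_fst, MonoidHom.coe_snd] at *
    have h1 : ((a', 1) : G × G') ∈ H := by
      obtain ⟨y, hy⟩ := pow_pow_eq_self h a'
      have : (((a', b') : G × G') ^ (Nat.card G')) ^ y ∈ H := H.zpow_mem (H.pow_mem hab' _) y
      simpa [Prod.pow_def, hy, pow_card_eq_one'] using this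
    have h2 : ((1, b'') : G × G') ∈ H := by
      obtain ⟨y, hy⟩ := pow_pow_eq_self h.symm b''
      have : (((a'', b'') : G × G') ^ (Nat.card G)) ^ y ∈ H := H.zpow_mem (H.pow_mem hab'' _) y
      simpa [Prod.pow_def, hy, pow_card_eq_one'] using this
    have := H.mul_mem h1 h2
    simpa using this

lemma map_fst_prod {G G' : Type*} [Group G] [Group G'] (A : Subgroup G) (B : Subgroup G') :
    (A.prod B).map (MonoidHom.fst G G') = A := by
  ext x
  simp only [Subgroup.mem_map, Subgroup.mem_prod, MonoidHom.coe_fst]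
  exact ⟨by rintro ⟨⟨a, b⟩, ⟨ha, hb⟩, rfl⟩; exact ha, fun hx => ⟨(x, 1), ⟨hx, B.one_mem⟩, rfl⟩⟩

lemma map_snd_prod {G G' : Type*} [Group G] [Group G'] (A : Subgroup G) (B : Subgroup G') :
    (A.prod B).map (MonoidHom.snd G G') = B := by
  ext x
  simp only [Subgroup.mem_map, Subgroup.mem_prod, MonoidHom.coe_snd]
  exact ⟨by rintro ⟨⟨a, b⟩, ⟨ha, hb⟩, rfl⟩; exact hb, fun hx => ⟨(1, x), ⟨A.one_mem, hx⟩, rfl⟩⟩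

lemma card_prod_subgroup {G G' : Type*} [Group G] [Group G'] (A : Subgroup G) (B : Subgroup G') :
    Nat.card (A.prod B) = Nat.card A * Nat.card B := by
  rw [Nat.card_congr (Subgroup.prodEquiv A B).toEquiv, Nat.card_prod]

/-- `σ₃(G) = ∑_{H ⊴ G} |H| / |G|` as a rational number. -/
noncomputable def sigma3 (G : Type*) [Group G] : ℚ :=
  ∑ᶠ (H : Subgroup G) (_ : H.Normal), (Nat.card H : ℚ) / (Nat.card G : ℚ)

lemma sigma3_eq_sum (G : Type*) [Group G] [Finite G] [Fintype (Subgroup G)]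
    [DecidablePred (fun H : Subgroup G => H.Normal)] :
    sigma3 G = ∑ H ∈ Finset.univ.filter (fun H : Subgroup G => H.Normal),
      (Nat.card H : ℚ) / (Nat.card G : ℚ) :=
  finsum_cond_eq_sum_of_cond_iff _ (fun _ => by simp)

theorem sigma3_mul_of_coprime (G G' : Type*) [Group G] [Group G'] [Finite G] [Finite G']
    (h : Nat.Coprime (Nat.card G) (Nat.card G')) :
    sigma3 (G × G') = sigma3 G * sigma3 G' := by
  classical
  haveI : Fintype (Subgroup G) := Fintype.ofFinite _
  haveI : Fintype (Subgroup G') := Fintype.ofFinite _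
  haveI : Fintype (Subgroup (G × G')) := Fintype.ofFinite _
  rw [sigma3_eq_sum, sigma3_eq_sum, sigma3_eq_sum, Finset.sum_mul_sum, ← Finset.sum_product']
  refine Finset.sum_nbij' (fun H => (H.map (MonoidHom.fst G G'), H.map (MonoidHom.snd G G')))
    (fun p => p.1.prod p.2) ?_ ?_ ?_ ?_ ?_
  · intro H hH
    simp only [Finset.mem_filter, Finset.mem_univ, true_and] at hH
    simp only [Finset.mem_product, Finset.mem_filter, Finset.mem_univ, true_and]
    exact ⟨hH.map _ Prod.fst_surjective, hH.map _ Prod.snd_surjective⟩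
  · rintro ⟨A, B⟩ hp
    simp only [Finset.mem_product, Finset.mem_filter, Finset.mem_univ, true_and] at hp
    simp only [Finset.mem_filter, Finset.mem_univ, true_and]
    haveI := hp.1; haveI := hp.2
    exact Subgroup.prod_normal A B
  · intro H _
    exact (subgroup_eq_prod h H).symm
  · rintro ⟨A, B⟩ _
    exact Prod.ext (map_fst_prod A B) (map_snd_prod A B)
  · intro H _
    rw [Nat.card_prod, div_mul_div_comm, Nat.cast_mul]
    congr 1
    rw [← Nat.cast_mul, ← card_prod_subgroup]
    exact_mod_cast congrArg (fun K : Subgroup (G × G') => (Nat.card K : ℚ)) (subgroup_eq_prod h H)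
end

section
/- If G is a finite group in the class C₃ (i.e. ∑_{H ⊴ G} |H| ≤ 2|G|) and N is a normal subgroup of G, then the quotient G/N is also in C₃, i.e. ∑_{K ⊴ G/N} |K| ≤ 2|G/N|. -/
/-- The sum of the orders of all normal subgroups of `G`. -/
noncomputable def normalSum (G : Type*) [Group G] : ℕ :=
  ∑ᶠ (H : Subgroup G) (_ : H.Normal), Nat.card H

lemma normalSum_eq_sum (G : Type*) [Group G] [Fintype (Subgroup G)]
    [DecidablePred (Subgroup.Normal (G := G))] :
    normalSum G = ∑ H ∈ Finset.univ.filter (Subgroup.Normal (G := G)), Nat.card H := by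
  apply finsum_cond_eq_sum_of_cond_iff
  simp

theorem quotient_mem_C3 (G : Type*) [Group G] [Finite G]
    (hG : normalSum G ≤ 2 * Nat.card G) (N : Subgroup G) (hN : N.Normal) :
    normalSum (G ⧸ N) ≤ 2 * Nat.card (G ⧸ N) := by
  classical
  letI : Fintype G := Fintype.ofFinite G
  letI : Fintype (Subgroup G) := Fintype.ofFinite _
  letI : Fintype (Subgroup (G ⧸ N)) := Fintype.ofFinite _
  set φ : Subgroup (G ⧸ N) → Subgroup G := fun K => K.comap (QuotientGroup.mk' N)
  have hφinj : Function.Injective φ :=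
    Subgroup.comap_injective (QuotientGroup.mk'_surjective N)
  have hcard : ∀ K : Subgroup (G ⧸ N), Nat.card (φ K) = Nat.card N * Nat.card K := by
    intro K
    have : ((φ K : Set G)) = QuotientGroup.mk ⁻¹' (K : Set (G ⧸ N)) := rfl
    calc Nat.card (φ K)
        = Nat.card (QuotientGroup.mk ⁻¹' (K : Set (G ⧸ N))) := by rw [← this]; rfl
      _ = Nat.card (N × (K : Set (G ⧸ N))) :=
          Nat.card_congr (QuotientGroup.preimageMkEquivSubgroupProdSet N _)
      _ = Nat.card N * Nat.card K := by rw [Nat.card_prod]; rfl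
  have key : Nat.card N * normalSum (G ⧸ N) ≤ normalSum G := by
    rw [normalSum_eq_sum (G ⧸ N), normalSum_eq_sum G, Finset.mul_sum]
    calc ∑ K ∈ Finset.univ.filter (Subgroup.Normal (G := G ⧸ N)), Nat.card N * Nat.card K
        = ∑ K ∈ Finset.univ.filter (Subgroup.Normal (G := G ⧸ N)), Nat.card (φ K) := by
          refine Finset.sum_congr rfl fun K _ => (hcard K).symm
      _ = ∑ H ∈ (Finset.univ.filter (Subgroup.Normal (G := G ⧸ N))).image φ, Nat.card H :=
          (Finset.sum_image (f := fun H : Subgroup G => Nat.card H) fun a _ b _ h => hφinj h).symm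
      _ ≤ ∑ H ∈ Finset.univ.filter (Subgroup.Normal (G := G)), Nat.card H := by
          refine Finset.sum_le_sum_of_subset ?_
          intro H hH
          simp only [Finset.mem_image, Finset.mem_filter, Finset.mem_univ, true_and] at hH ⊢
          obtain ⟨K, hK, rfl⟩ := hH
          exact hK.comap _
  have hpos : 0 < Nat.card N := Nat.card_pos
  have h2 : Nat.card N * normalSum (G ⧸ N) ≤ Nat.card N * (2 * Nat.card (G ⧸ N)) := by
    calc Nat.card N * normalSum (G ⧸ N) ≤ normalSum G := key
      _ ≤ 2 * Nat.card G := hG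
      _ = Nat.card N * (2 * Nat.card (G ⧸ N)) := by
          rw [Subgroup.card_eq_card_quotient_mul_card_subgroup N]; ring
  exact Nat.le_of_mul_le_mul_left h2 hpos
end

section
/- A finite nilpotent group G belongs to C₃ (i.e. ∑_{H ⊴ G} |H| ≤ 2|G|) if and only if G is cyclic and |G| is a deficient or perfect number (i.e. σ(|G|) ≤ 2|G|). -/
/-!
In a finite cyclic group every subgroup is normal and is determined by its order, which can be
any divisor of `|G|`; hence `normalSum G = σ(|G|)`.

Conversely, in a nilpotent group the maximal subgroups are normal of prime index. If no two of
them had the same index, their indices would be pairwise coprime, so an element lying in none of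
them could be built one maximal subgroup at a time; it would generate `G`. Hence a non-cyclic
nilpotent `G` has maximal subgroups `M₁ ≠ M₂` of the same prime index `p`. The quotient
`G ⧸ (M₁ ⊓ M₂)` has order `p²` and exponent `p`, so its `p² - 1` nontrivial elements are covered
by at least `p + 1` subgroups of order `p`. Their preimages are `p + 1` normal subgroups of index
`p`, and together with `G` their orders already add up to `2|G| + |G|/p`.
-/

open Subgroup

theorem IsCyclic.eq_ker_powMonoidHom_card {G : Type*} [CommGroup G] [IsCyclic G] [Finite G]
    (H : Subgroup G) : H = (powMonoidHom (Nat.card H) : G →* G).ker := by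
  refine eq_of_le_of_card_ge
    (fun x hx => orderOf_dvd_iff_pow_eq_one.mp (H.orderOf_dvd_natCard hx)) ?_
  rw [IsCyclic.card_powMonoidHom_ker, Nat.gcd_eq_right (card_subgroup_dvd_card H)]

section

variable {G : Type*} [Group G]

theorem normalSum_eq_sum_divisors [Finite G] [IsCyclic G] :
    normalSum G = ∑ d ∈ (Nat.card G).divisors, d := by
  classical
  let _ : CommGroup G := IsCyclic.commGroup
  have := Fintype.ofFinite (Subgroup G)
  have hnormal : ∀ H : Subgroup G, (∑ᶠ _ : H.Normal, Nat.card H) = Nat.card H := fun H => by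
    rw [finsum_eq_if, if_pos (normal_of_isMulCommutative H)]
  rw [normalSum, finsum_congr hnormal, finsum_eq_sum_of_fintype]
  refine Finset.sum_nbij (fun H => Nat.card H)
    (fun H _ => Nat.mem_divisors.mpr ⟨card_subgroup_dvd_card H, Nat.card_pos.ne'⟩)
    (fun H _ K _ h => ?_) (fun d hd => ?_) (fun _ _ => rfl)
  · rw [IsCyclic.eq_ker_powMonoidHom_card H, IsCyclic.eq_ker_powMonoidHom_card K]
    exact congrArg (fun n => (powMonoidHom n : G →* G).ker) h
  · refine ⟨(powMonoidHom d : G →* G).ker, Finset.mem_coe.mpr (Finset.mem_univ _), ?_⟩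
    change Nat.card _ = d
    rw [IsCyclic.card_powMonoidHom_ker, Nat.gcd_eq_right (Nat.dvd_of_mem_divisors hd)]

theorem sum_card_le_normalSum [Finite G] (s : Finset (Subgroup G)) (hs : ∀ H ∈ s, H.Normal) :
    ∑ H ∈ s, Nat.card H ≤ normalSum G := by
  classical
  have := Fintype.ofFinite (Subgroup G)
  rw [normalSum, finsum_eq_sum_of_fintype]
  simp_rw [finsum_eq_if]
  rw [← Finset.sum_filter]
  exact Finset.sum_le_sum_of_subset fun H hH => Finset.mem_filter.mpr ⟨Finset.mem_univ H, hs H hH⟩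

theorem two_mul_card_lt_normalSum_of_index_eq [Finite G] {p : ℕ} (hp : 1 < p)
    (s : Finset (Subgroup G)) (hs : ∀ H ∈ s, H.Normal ∧ H.index = p) (hcard : p + 1 ≤ s.card) :
    2 * Nat.card G < normalSum G := by
  classical
  have htop : (⊤ : Subgroup G) ∉ s := fun h => by
    have := (hs ⊤ h).2
    rw [index_top] at this
    omega
  have hsum : p * ∑ H ∈ s, Nat.card H = s.card * Nat.card G := by
    rw [Finset.mul_sum, Finset.sum_congr rfl fun H hH => (hs H hH).2 ▸ H.index_mul_card,
      Finset.sum_const, smul_eq_mul]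
  have hle := sum_card_le_normalSum (insert ⊤ s)
    (Finset.forall_mem_insert _ _ _ |>.mpr ⟨normal_top, fun H hH => (hs H hH).1⟩)
  rw [Finset.sum_insert htop, card_top] at hle
  have hlt : Nat.card G < ∑ H ∈ s, Nat.card H := by
    refine Nat.lt_of_mul_lt_mul_left (a := p) ?_
    rw [hsum]
    nlinarith [Nat.card_pos (α := G)]
  omega

theorem card_sub_one_le_mul_ncard_subgroups_card_eq [Finite G] {p : ℕ} [Fact p.Prime]
    (hpow : ∀ g : G, g ^ p = 1) :
    Nat.card G - 1 ≤ (p - 1) * {H : Subgroup G | Nat.card H = p}.ncard := by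
  classical
  have := Fintype.ofFinite G
  have hcard : ∀ g ∈ Finset.univ.erase (1 : G), Nat.card (zpowers g) = p := fun g hg => by
    rw [Nat.card_zpowers, orderOf_eq_prime (hpow g) (Finset.ne_of_mem_erase hg)]
  have hfiber : ∀ H ∈ (Finset.univ.erase 1).image zpowers,
      {g ∈ Finset.univ.erase (1 : G) | zpowers g = H}.card ≤ p - 1 := by
    intro H hH
    obtain ⟨g, hg, rfl⟩ := Finset.mem_image.mp hH
    calc {x ∈ Finset.univ.erase (1 : G) | zpowers x = zpowers g}.card
        ≤ ((zpowers g : Set G).toFinset.erase 1).card := by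
          refine Finset.card_le_card fun x hx => ?_
          obtain ⟨hx1, hxg⟩ := Finset.mem_filter.mp hx
          exact Finset.mem_erase.mpr ⟨Finset.ne_of_mem_erase hx1,
            Set.mem_toFinset.mpr (hxg ▸ mem_zpowers x)⟩
      _ = p - 1 := by
        rw [Finset.card_erase_of_mem (Set.mem_toFinset.mpr (one_mem _)), Set.toFinset_card,
          ← Nat.card_eq_fintype_card]
        exact congrArg (· - 1) (hcard g hg)
  calc Nat.card G - 1 = (Finset.univ.erase (1 : G)).card := by
        rw [Finset.card_erase_of_mem (Finset.mem_univ 1), Finset.card_univ,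
          Nat.card_eq_fintype_card]
    _ ≤ (p - 1) * ((Finset.univ.erase 1).image zpowers).card :=
        Finset.card_le_mul_card_image _ _ hfiber
    _ ≤ (p - 1) * {H : Subgroup G | Nat.card H = p}.ncard := by
        refine Nat.mul_le_mul_left _ ?_
        rw [← Set.ncard_coe_finset]
        refine Set.ncard_le_ncard (fun H hH => ?_) (Set.toFinite _)
        obtain ⟨g, hg, rfl⟩ := Finset.mem_image.mp hH
        exact hcard g hg

theorem two_mul_card_lt_normalSum_of_pow_mem [Finite G] {N : Subgroup G} [N.Normal] {p : ℕ}
    (hp : p.Prime) (hN : N.index = p ^ 2) (hpow : ∀ g : G, g ^ p ∈ N) :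
    2 * Nat.card G < normalSum G := by
  classical
  have := Fact.mk hp
  have hQ : Nat.card (G ⧸ N) = p ^ 2 := index_eq_card N ▸ hN
  have := IsPGroup.isMulCommutative_of_card_eq_prime_sq hQ
  set S := {H : Subgroup (G ⧸ N) | Nat.card H = p}
  have hS : p + 1 ≤ S.ncard := by
    have hcount := card_sub_one_le_mul_ncard_subgroups_card_eq (p := p) fun q : G ⧸ N =>
      QuotientGroup.induction_on q fun g => by
        rw [← QuotientGroup.mk_pow, QuotientGroup.eq_one_iff]
        exact hpow g
    obtain ⟨k, rfl⟩ : ∃ k, p = k + 1 := ⟨p - 1, (Nat.sub_add_cancel hp.one_le).symm⟩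
    rw [hQ, show (k + 1) ^ 2 - 1 = k * (k + 2) by ring_nf; omega, Nat.add_sub_cancel] at hcount
    exact Nat.le_of_mul_le_mul_left hcount (Nat.pos_of_ne_zero fun h => hp.ne_one (by omega))
  refine two_mul_card_lt_normalSum_of_index_eq hp.one_lt
    ((Set.toFinite S).toFinset.image (comap (QuotientGroup.mk' N))) (fun K hK => ?_) ?_
  · obtain ⟨H, hH, rfl⟩ := Finset.mem_image.mp hK
    refine ⟨(normal_of_isMulCommutative H).comap _, ?_⟩
    rw [index_comap_of_surjective H (QuotientGroup.mk'_surjective N)]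
    have hmul := H.card_mul_index
    rw [hQ, (Set.Finite.mem_toFinset _).mp hH, sq] at hmul
    exact Nat.eq_of_mul_eq_mul_left hp.pos hmul
  · rwa [Finset.card_image_of_injective _ (comap_injective (QuotientGroup.mk'_surjective N)),
      ← Set.ncard_eq_toFinset_card]

theorem Subgroup.index_finset_inf_dvd_prod (s : Finset (Subgroup G)) (hs : ∀ M ∈ s, M.Normal) :
    (s.inf id).index ∣ ∏ M ∈ s, M.index := by
  classical
  induction s using Finset.induction_on with
  | empty => simp
  | @insert M s hM ih =>
    have : M.Normal := hs M (Finset.mem_insert_self M s)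
    rw [Finset.inf_insert, Finset.prod_insert hM, id,
      ← relIndex_mul_index (inf_le_right : M ⊓ s.inf id ≤ _), inf_relIndex_right]
    exact mul_dvd_mul (relIndex_dvd_index_of_normal M _)
      (ih fun K hK => hs K (Finset.mem_insert_of_mem hK))

theorem Subgroup.exists_forall_notMem_of_pairwise_coprime_index (s : Finset (Subgroup G))
    (hs : ∀ M ∈ s, M.Normal ∧ M ≠ ⊤)
    (hcop : (s : Set (Subgroup G)).Pairwise fun M₁ M₂ => M₁.index.Coprime M₂.index) :
    ∃ x : G, ∀ M ∈ s, x ∉ M := by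
  classical
  induction s using Finset.induction_on with
  | empty => exact ⟨1, by simp⟩
  | @insert M₀ s hM₀ ih =>
    rw [Finset.coe_insert, Set.pairwise_insert] at hcop
    have hs' : ∀ M ∈ s, M.Normal ∧ M ≠ ⊤ := fun M hM => hs M (Finset.mem_insert_of_mem hM)
    obtain ⟨x, hx⟩ := ih hs' hcop.1
    by_cases hxM₀ : x ∉ M₀
    · exact ⟨x, Finset.forall_mem_insert _ _ _ |>.mpr ⟨hxM₀, hx⟩⟩
    rw [not_not] at hxM₀
    have hnle : ¬ s.inf id ≤ M₀ := by
      intro hle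
      have hcop₀ : M₀.index.Coprime (∏ M ∈ s, M.index) := Nat.Coprime.prod_right fun M hM =>
        (hcop.2 M hM fun h => hM₀ (h ▸ hM)).1
      refine (hs M₀ (Finset.mem_insert_self M₀ s)).2 (index_eq_one.mp ?_)
      exact Nat.Coprime.eq_one_of_dvd hcop₀
        ((index_dvd_of_le hle).trans (index_finset_inf_dvd_prod s fun M hM => (hs' M hM).1))
    obtain ⟨y, hy, hyM₀⟩ := SetLike.not_le_iff_exists.mp hnle
    refine ⟨x * y, Finset.forall_mem_insert _ _ _ |>.mpr ⟨?_, fun M hM hxy => ?_⟩⟩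
    · exact fun hxy => hyM₀ ((mul_mem_cancel_left hxM₀).mp hxy)
    · exact hx M hM ((mul_mem_cancel_right (Finset.inf_le (f := id) hM hy)).mp hxy)

theorem QuotientGroup.isSimpleGroup_of_isCoatom {M : Subgroup G} [M.Normal]
    (hM : IsCoatom M) : IsSimpleGroup (G ⧸ M) := by
  have : IsSimpleOrder (Set.Ici M) := Set.isSimpleOrder_Ici_iff_isCoatom.mpr hM
  have : IsSimpleOrder (Subgroup (G ⧸ M)) :=
    (show Subgroup (G ⧸ M) ≃o Set.Ici M from QuotientGroup.comapMk'OrderIso M).isSimpleOrder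
  have : Nontrivial (G ⧸ M) := Subgroup.nontrivial_iff.mp inferInstance
  exact ⟨fun H _ => eq_bot_or_eq_top H⟩

theorem Subgroup.Normal.of_isCoatom [Group.IsNilpotent G] {M : Subgroup G} (hM : IsCoatom M) :
    M.Normal :=
  Group.normalizerCondition_of_isNilpotent.normal_of_coatom M hM

theorem Subgroup.index_prime_of_isCoatom [Group.IsNilpotent G] {M : Subgroup G}
    (hM : IsCoatom M) : M.index.Prime := by
  have := Normal.of_isCoatom hM
  have := QuotientGroup.isSimpleGroup_of_isCoatom hM
  exact index_eq_card M ▸ Group.is_simple_iff_prime_card.mp this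

theorem exists_isCoatom_ne_index_eq_of_not_isCyclic [Finite G] [Group.IsNilpotent G]
    (h : ¬IsCyclic G) :
    ∃ M₁ M₂ : Subgroup G, IsCoatom M₁ ∧ IsCoatom M₂ ∧ M₁ ≠ M₂ ∧ M₁.index = M₂.index := by
  by_contra! hinj
  refine h (isCyclic_iff_exists_zpowers_eq_top.mpr ?_)
  have hfin : {M : Subgroup G | IsCoatom M}.Finite := Set.toFinite _
  obtain ⟨x, hx⟩ := exists_forall_notMem_of_pairwise_coprime_index hfin.toFinset
    (fun M hM => ⟨Normal.of_isCoatom (hfin.mem_toFinset.mp hM), (hfin.mem_toFinset.mp hM).1⟩)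
    (fun M₁ h₁ M₂ h₂ hne => by
      rw [Set.Finite.coe_toFinset] at h₁ h₂
      exact (Nat.coprime_primes (index_prime_of_isCoatom h₁) (index_prime_of_isCoatom h₂)).mpr
        (hinj M₁ M₂ h₁ h₂ hne))
  refine ⟨x, (eq_top_or_exists_le_coatom (zpowers x)).resolve_right ?_⟩
  rintro ⟨M, hM, hxM⟩
  exact hx M (hfin.mem_toFinset.mpr hM) (hxM (mem_zpowers x))

theorem Subgroup.index_inf_eq_mul_of_prime {M K : Subgroup G} [M.Normal] (hM : M.index.Prime)
    (hKM : ¬K ≤ M) : (M ⊓ K).index = M.index * K.index := by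
  have hrel : M.relIndex K = M.index :=
    ((Nat.dvd_prime hM).mp (relIndex_dvd_index_of_normal M K)).resolve_left
      (mt relIndex_eq_one.mp hKM)
  rw [← relIndex_mul_index (inf_le_right : M ⊓ K ≤ K), inf_relIndex_right, hrel]

theorem isCyclic_of_normalSum_le [Finite G] [Group.IsNilpotent G]
    (hle : normalSum G ≤ 2 * Nat.card G) : IsCyclic G := by
  by_contra hcyc
  obtain ⟨M₁, M₂, h₁, h₂, hne, hidx⟩ := exists_isCoatom_ne_index_eq_of_not_isCyclic hcyc
  have := Normal.of_isCoatom h₁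
  have := Normal.of_isCoatom h₂
  have hp := index_prime_of_isCoatom h₁
  have hM₂ : ¬M₂ ≤ M₁ := fun h => hne (h₂.le_iff.mp h |>.resolve_left h₁.1)
  refine (two_mul_card_lt_normalSum_of_pow_mem (N := M₁ ⊓ M₂) hp ?_ fun g => ?_).not_ge hle
  · rw [index_inf_eq_mul_of_prime hp hM₂, ← hidx, sq]
  · exact ⟨pow_index_mem M₁ g, hidx ▸ pow_index_mem M₂ g⟩

end

theorem nilpotent_mem_C3_iff (G : Type*) [Group G] [Finite G] (h : Group.IsNilpotent G) :
    normalSum G ≤ 2 * Nat.card G ↔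
      IsCyclic G ∧ (∑ d ∈ (Nat.card G).divisors, d) ≤ 2 * Nat.card G := by
  constructor
  · intro hle
    have := isCyclic_of_normalSum_le hle
    exact ⟨this, normalSum_eq_sum_divisors (G := G) ▸ hle⟩
  · rintro ⟨_, hσ⟩
    rwa [normalSum_eq_sum_divisors]
end

section
/- If a finite group G belongs to C₃ (i.e. ∑_{H ⊴ G} |H| ≤ 2|G|), then the abelianization G/[G,G] is cyclic and its order n satisfies σ(n) ≤ 2n. -/
open Function Finset

noncomputable def subgroupSum (A : Type*) [Group A] : ℕ :=
  ∑ᶠ K : Subgroup A, Nat.card K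

theorem normalSum_eq_finsum_mem (G : Type*) [Group G] :
    normalSum G = ∑ᶠ H ∈ {H : Subgroup G | H.Normal}, Nat.card H :=
  rfl

theorem normalSum_eq_subgroupSum (A : Type*) [CommGroup A] : normalSum A = subgroupSum A := by
  simp [normalSum, subgroupSum, Subgroup.normal_of_isMulCommutative]

section Quotient

variable {G Q : Type*} [Group G] [Group Q] {f : G →* Q}

theorem Subgroup.card_comap_of_surjective (hf : Surjective f) (K : Subgroup Q) :
    Nat.card (K.comap f) = Nat.card K * Nat.card f.ker := by
  rw [mul_comm, ← relIndex_bot_left, ← relIndex_mul_relIndex ⊥ f.ker _ bot_le (f.ker_le_comap K),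
    relIndex_bot_left, relIndex_ker, map_comap_eq_self_of_surjective hf]

theorem normalSum_mul_card_ker_le [Finite G] (hf : Surjective f) :
    normalSum Q * Nat.card f.ker ≤ normalSum G := by
  set N : Set (Subgroup Q) := {K | K.Normal}
  have hcomap : Subgroup.comap f '' N ⊆ {H | H.Normal} := by
    rintro _ ⟨K, hK, rfl⟩
    exact hK.comap f
  calc normalSum Q * Nat.card f.ker
      = ∑ᶠ K ∈ N, Nat.card (K.comap f) := by
        simp only [normalSum_eq_finsum_mem, finsum_mem_mul, Subgroup.card_comap_of_surjective hf, N]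
    _ = ∑ᶠ H ∈ Subgroup.comap f '' N, Nat.card H :=
        (finsum_mem_image (f := fun H : Subgroup G => Nat.card H)
          (Subgroup.comap_injective hf).injOn).symm
    _ ≤ normalSum G := by
        rw [normalSum_eq_finsum_mem, ← finsum_mem_add_sdiff hcomap (Set.toFinite _)]
        exact le_self_add

theorem normalSum_le_two_mul_card_of_surjective [Finite G] (hf : Surjective f)
    (h : normalSum G ≤ 2 * Nat.card G) : normalSum Q ≤ 2 * Nat.card Q := by
  have hcard : Nat.card G = Nat.card Q * Nat.card f.ker := by
    rw [← Subgroup.card_top (G := G), ← Subgroup.comap_top f,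
      Subgroup.card_comap_of_surjective hf, Subgroup.card_top]
  refine Nat.le_of_mul_le_mul_right ?_ (Nat.card_pos (α := f.ker))
  calc normalSum Q * Nat.card f.ker ≤ normalSum G := normalSum_mul_card_ker_le hf
    _ ≤ 2 * Nat.card G := h
    _ = 2 * Nat.card Q * Nat.card f.ker := by rw [hcard, mul_assoc]

end Quotient

section SubgroupSum

variable {A : Type*} [Group A] [Finite A]

theorem IsCyclic.of_subgroupSum_le (h : subgroupSum A ≤ 2 * Nat.card A) : IsCyclic A := by
  classical
  by_contra hA
  have : Nontrivial A := Nontrivial.of_not_isCyclic hA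
  have : Fintype A := Fintype.ofFinite A
  have : Fintype (Subgroup A) := Fintype.ofFinite _
  obtain ⟨x, hx⟩ := exists_ne (1 : A)
  set S : Finset (Subgroup A) := univ \ {⊤, ⊥}
  have hzpowers_mem (a : A) (ha : a ≠ 1) : Subgroup.zpowers a ∈ S := by
    have : Subgroup.zpowers a ≠ ⊤ := fun h => hA (isCyclic_iff_exists_zpowers_eq_top.mpr ⟨a, h⟩)
    simp [S, this, Subgroup.zpowers_eq_bot, ha]
  have hcover : (univ : Finset A) ⊆ S.biUnion fun K => {a | a ∈ K} := by
    intro a _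
    by_cases ha : a = 1
    · exact mem_biUnion.mpr ⟨_, hzpowers_mem x hx, by simp [ha]⟩
    · exact mem_biUnion.mpr ⟨_, hzpowers_mem a ha, by simp [Subgroup.mem_zpowers]⟩
  have hcard (K : Subgroup A) : #{a | a ∈ K} = Nat.card K := by
    simp [Nat.card_eq_fintype_card, Fintype.card_subtype]
  have hS : Nat.card A ≤ ∑ K ∈ S, Nat.card K := calc
    Nat.card A = #(univ : Finset A) := Nat.card_eq_fintype_card.trans card_univ.symm
    _ ≤ #(S.biUnion fun K => {a | a ∈ K}) := card_le_card hcover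
    _ ≤ ∑ K ∈ S, Nat.card K := card_biUnion_le.trans_eq (sum_congr rfl fun K _ => hcard K)
  have htotal : subgroupSum A = ∑ K ∈ S, Nat.card K + (Nat.card A + 1) := by
    rw [subgroupSum, finsum_eq_sum_of_fintype, ← sum_sdiff (subset_univ {⊤, ⊥}),
      sum_pair top_ne_bot, Subgroup.card_top, Subgroup.card_bot]
  omega

theorem sum_divisors_orderOf_le_subgroupSum (g : A) :
    ∑ d ∈ (orderOf g).divisors, d ≤ subgroupSum A := by
  classical
  have : Fintype (Subgroup A) := Fintype.ofFinite _
  set f : ℕ → Subgroup A := fun d => Subgroup.zpowers (g ^ (orderOf g / d))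
  have hcard (d : ℕ) (hd : d ∈ (orderOf g).divisors) : Nat.card (f d) = d := by
    rw [Nat.card_zpowers,
      orderOf_pow_orderOf_div (orderOf_pos g).ne' (Nat.dvd_of_mem_divisors hd)]
  calc ∑ d ∈ (orderOf g).divisors, d = ∑ d ∈ (orderOf g).divisors, Nat.card (f d) :=
        (sum_congr rfl hcard).symm
    _ = ∑ K ∈ (orderOf g).divisors.image f, Nat.card (K : Subgroup A) :=
        (sum_image (f := fun K : Subgroup A => Nat.card K) fun a ha b hb hab => by
          rw [← hcard a ha, ← hcard b hb, hab]).symm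
    _ ≤ ∑ K : Subgroup A, Nat.card K := sum_le_sum_of_subset (subset_univ _)
    _ = subgroupSum A := (finsum_eq_sum_of_fintype _).symm

end SubgroupSum

theorem abelianization_of_mem_C3 (G : Type*) [Group G] [Finite G]
    (h : normalSum G ≤ 2 * Nat.card G) :
    IsCyclic (Abelianization G) ∧
      (∑ d ∈ (Nat.card (Abelianization G)).divisors, d) ≤ 2 * Nat.card (Abelianization G) := by
  have hA : subgroupSum (Abelianization G) ≤ 2 * Nat.card (Abelianization G) := by
    rw [← normalSum_eq_subgroupSum]
    exact normalSum_le_two_mul_card_of_surjective (QuotientGroup.mk'_surjective _) h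
  have hcyc := IsCyclic.of_subgroupSum_le hA
  obtain ⟨g, hg⟩ := IsCyclic.exists_ofOrder_eq_natCard (α := Abelianization G)
  refine ⟨hcyc, ?_⟩
  rw [← hg] at hA ⊢
  exact (sum_divisors_orderOf_le_subgroupSum g).trans hA
end

section
/- Let G be a nonabelian P-group of order p^{n-1}q with n ≥ 4, where p is an odd prime and q a prime dividing p−1, i.e. G is a semidirect product of an elementary abelian normal subgroup of order p^{n-1} by a group of order q acting by a nontrivial power automorphism. Then G does not belong to C₃, i.e. ∑_{H ⊴ G} |H| > 2|G|. -/
open Finset LinearMap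

section PowerEndomorphism

variable {G : Type*} [Group G] {m : ℕ}

theorem commute_pow_sub_one_pow_of_pow_mul_distrib (hm : ∀ x y : G, (x * y) ^ m = x ^ m * y ^ m)
    (x y : G) : Commute (x ^ (m - 1)) (y ^ m) := by
  obtain _ | j := m
  · simp
  have hyx : (y * x) ^ j = x ^ j * y ^ j := by
    have h := hm x y
    rw [pow_succ, ← mul_assoc, mul_pow_mul] at h
    calc (y * x) ^ j = x⁻¹ * (x * (y * x) ^ j * y) * y⁻¹ := by group
      _ = x ^ j * y ^ j := by rw [h]; group
  show x ^ j * y ^ (j + 1) = y ^ (j + 1) * x ^ j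
  calc x ^ j * y ^ (j + 1) = (y * x) ^ j * (y * x) * x⁻¹ := by rw [hyx]; group
    _ = y ^ (j + 1) * x ^ j := by rw [← pow_succ, hm]; group

theorem commute_of_pow_mul_distrib (hm : ∀ x y : G, (x * y) ^ m = x ^ m * y ^ m)
    (hm₀ : (Nat.card G).Coprime m) (hm₁ : (Nat.card G).Coprime (m - 1)) (a b : G) :
    Commute a b := by
  obtain ⟨x, rfl⟩ := (powCoprime hm₁).surjective a
  obtain ⟨y, rfl⟩ := (powCoprime hm₀).surjective b
  exact commute_pow_sub_one_pow_of_pow_mul_distrib hm x y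

end PowerEndomorphism

section PowerAutomorphism

variable {G : Type*} [Group G] {p m : ℕ}

theorem not_dvd_and_not_dvd_sub_one_of_conj_eq_pow {k x : G} (hx : x ^ p = 1)
    (hkx : k * x * k⁻¹ = x ^ m) (hne : k * x * k⁻¹ ≠ x) : ¬ p ∣ m ∧ ¬ p ∣ m - 1 := by
  have hm₀ : ¬ p ∣ m := by
    rintro ⟨t, rfl⟩
    have hconj : k * x * k⁻¹ = 1 := by rw [hkx, pow_mul, hx, one_pow]
    have hx₁ : x = 1 := by simpa using hconj
    exact hne (by rw [hconj, hx₁])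
  refine ⟨hm₀, ?_⟩
  rintro ⟨t, ht⟩
  obtain _ | j := m
  · exact hm₀ (dvd_zero p)
  rw [Nat.add_sub_cancel] at ht
  exact hne (by rw [hkx, pow_succ, ht, pow_mul, hx, one_pow, one_mul])

theorem Subgroup.isMulCommutative_of_conj_eq_pow {H : Subgroup G} {d : ℕ} (hp : p.Prime)
    (hcard : Nat.card H = p ^ d) (hH : ∀ x ∈ H, x ^ p = 1) {k : G}
    (hk : ∀ x ∈ H, k * x * k⁻¹ = x ^ m) (hne : ∃ x ∈ H, k * x * k⁻¹ ≠ x) :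
    IsMulCommutative H := by
  obtain ⟨x, hx, hkx⟩ := hne
  obtain ⟨hm₀, hm₁⟩ := not_dvd_and_not_dvd_sub_one_of_conj_eq_pow (hH x hx) (hk x hx) hkx
  have hcoprime {r : ℕ} (hr : ¬ p ∣ r) : (Nat.card H).Coprime r :=
    hcard ▸ (hp.coprime_iff_not_dvd.2 hr).pow_left d
  have hdistrib (a b : H) : (a * b) ^ m = a ^ m * b ^ m := by
    ext
    simp only [coe_mul, coe_pow]
    rw [← hk _ a.2, ← hk _ b.2, ← hk _ (mul_mem a.2 b.2)]
    group
  exact isMulCommutative_iff.2 fun a b =>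
    commute_of_pow_mul_distrib hdistrib (hcoprime hm₀) (hcoprime hm₁) a b

theorem Subgroup.exists_conj_eq_pow_of_isComplement' {H K : Subgroup G} [IsMulCommutative H]
    (hHK : H.IsComplement' K) (hK : ∀ k ∈ K, ∃ m : ℕ, ∀ x ∈ H, k * x * k⁻¹ = x ^ m) (g : G) :
    ∃ m : ℕ, ∀ x ∈ H, g * x * g⁻¹ = x ^ m := by
  obtain ⟨h, hh, k, hk, rfl⟩ := Set.mem_mul.1 (hHK.mul_eq ▸ Set.mem_univ g)
  obtain ⟨m, hm⟩ := hK k hk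
  refine ⟨m, fun x hx => ?_⟩
  calc h * k * x * (h * k)⁻¹ = h * (k * x * k⁻¹) * h⁻¹ := by group
    _ = x ^ m := by
      rw [hm x hx, setLike_mul_comm hh (H.pow_mem hx m), mul_inv_cancel_right]

theorem Subgroup.normal_of_le_of_conj_eq_pow {H N : Subgroup G}
    (hconj : ∀ g : G, ∃ m : ℕ, ∀ x ∈ H, g * x * g⁻¹ = x ^ m) (hN : N ≤ H) : N.Normal :=
  ⟨fun x hx g => by
    obtain ⟨m, hm⟩ := hconj g
    rw [hm x (hN hx)]
    exact N.pow_mem hx m⟩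

end PowerAutomorphism

theorem AddMonoidHom.card_le_card_mul_card_ker {A B : Type*} [AddGroup A] [AddGroup B] [Finite B]
    (f : A →+ B) : Nat.card A ≤ Nat.card B * Nat.card f.ker := by
  rw [← f.ker.card_mul_index, AddSubgroup.index_ker, mul_comm]
  gcongr
  exact Nat.card_le_card_of_injective _ Subtype.val_injective

section Hyperplanes

variable {K V : Type*} [Field K] [AddCommGroup V] [Module K V]

theorem Module.Dual.exists_smul_eq_of_ker_le_ker {f g : Module.Dual K V} (h : ker f ≤ ker g) :
    ∃ c : K, c • f = g := by
  have : g ∈ Submodule.span K (Set.range fun _ : Unit => f) :=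
    mem_span_of_iInf_ker_le_ker (by simpa using h)
  simpa [Submodule.mem_span_singleton] using this

theorem Module.Dual.card_le_card_mul_card_ker [Finite K] (f : Module.Dual K V) :
    Nat.card V ≤ Nat.card K * Nat.card (ker f) :=
  f.toAddMonoidHom.card_le_card_mul_card_ker

/-- The kernels of the linear forms: a linear form is determined by its kernel up to a scalar. -/
theorem exists_finset_submodule_card_le_card_mul [Finite K] [Finite V] :
    ∃ T : Finset (Submodule K V),
      Nat.card V ≤ Nat.card K * #T ∧ ∀ W ∈ T, Nat.card V ≤ Nat.card K * Nat.card W := by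
  classical
  have : Finite (Module.Dual K V) := Module.finite_of_finite K
  have := Fintype.ofFinite (Module.Dual K V)
  refine ⟨univ.image fun f : Module.Dual K V => ker f, ?_, ?_⟩
  · have hfiber : ∀ W ∈ univ.image fun f : Module.Dual K V => ker f,
        #{f : Module.Dual K V | ker f = W} ≤ Nat.card K := by
      intro W hW
      obtain ⟨f₀, -, rfl⟩ := mem_image.1 hW
      have := Fintype.ofFinite K
      calc #{f : Module.Dual K V | ker f = ker f₀} ≤ #(univ.image fun c : K => c • f₀) :=
            card_le_card fun g hg => by
              obtain ⟨c, hc⟩ := Module.Dual.exists_smul_eq_of_ker_le_ker (mem_filter.1 hg).2.ge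
              exact mem_image.2 ⟨c, mem_univ _, hc⟩
        _ ≤ Nat.card K := by rw [Nat.card_eq_fintype_card]; exact card_image_le
    calc Nat.card V = Nat.card (Module.Dual K V) :=
          Nat.card_congr (Module.Free.chooseBasis K V).toDualEquiv.toEquiv
      _ = #(univ : Finset (Module.Dual K V)) := Nat.card_eq_fintype_card
      _ ≤ _ := card_le_mul_card_image _ _ hfiber
  · intro W hW
    obtain ⟨f, -, rfl⟩ := mem_image.1 hW
    exact f.card_le_card_mul_card_ker

end Hyperplanes

open scoped IsMulCommutative in
theorem Subgroup.exists_finset_le_of_pow_eq_one {G : Type*} [Group G] {p : ℕ} [Fact p.Prime]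
    (H : Subgroup G) [IsMulCommutative H] [Finite H] (hH : ∀ x ∈ H, x ^ p = 1) :
    ∃ S : Finset (Subgroup G),
      Nat.card H ≤ p * #S ∧ ∀ N ∈ S, N ≤ H ∧ Nat.card H ≤ p * Nat.card N := by
  classical
  have : Module (ZMod p) (Additive H) :=
    AddCommGroup.zmodModule fun x => Subtype.ext (hH _ x.toMul.2)
  let Ψ : Submodule (ZMod p) (Additive H) → Subgroup G :=
    fun W => (AddSubgroup.toSubgroup' W.toAddSubgroup).map H.subtype
  have hΨ : Function.Injective Ψ := (Subgroup.map_injective H.subtype_injective).comp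
    (AddSubgroup.toSubgroup'.injective.comp Submodule.toAddSubgroup_injective)
  have hcard (W : Submodule (ZMod p) (Additive H)) : Nat.card (Ψ W) = Nat.card ↥W :=
    Subgroup.card_map_of_injective (K := AddSubgroup.toSubgroup' W.toAddSubgroup) H.subtype_injective
  obtain ⟨T, hT, hTcard⟩ := exists_finset_submodule_card_le_card_mul (K := ZMod p) (V := Additive H)
  rw [Nat.card_zmod] at hT hTcard
  refine ⟨T.image Ψ, by rwa [card_image_of_injective _ hΨ], fun N hN => ?_⟩
  obtain ⟨W, hW, rfl⟩ := mem_image.1 hN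
  exact ⟨Subgroup.map_subtype_le _, (hcard W).symm ▸ hTcard W hW⟩

theorem card_add_sum_card_le_normalSum {G : Type*} [Group G] [Finite G] [DecidableEq (Subgroup G)]
    (S : Finset (Subgroup G)) (hS : ∀ N ∈ S, N.Normal) (htop : ⊤ ∉ S) :
    Nat.card G + ∑ N ∈ S, Nat.card N ≤ normalSum G := by
  rw [← Subgroup.card_top, ← sum_insert (f := fun N : Subgroup G => Nat.card N) htop]
  change _ ≤ ∑ᶠ N ∈ {N : Subgroup G | N.Normal}, Nat.card N
  rw [finsum_mem_eq_finite_toFinset_sum _ (Set.toFinite _)]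
  refine sum_le_sum_of_subset fun N hN => ?_
  rw [Set.Finite.mem_toFinset, Set.mem_ofPred_eq]
  obtain rfl | hN := mem_insert.1 hN
  exacts [inferInstance, hS N hN]

theorem mul_lt_sum_of_le_mul {ι : Type*} {s : Finset ι} {f : ι → ℕ} {p a q : ℕ} (hqp : q < p)
    (ha : p ^ 3 ≤ a) (hs : a ≤ p * #s) (hf : ∀ i ∈ s, a ≤ p * f i) :
    a * q < ∑ i ∈ s, f i := by
  have hp : 0 < p := by omega
  have hsum : #s * a ≤ p * ∑ i ∈ s, f i := by
    rw [mul_sum]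
    simpa using card_nsmul_le_sum s (fun i => p * f i) a hf
  refine Nat.lt_of_mul_lt_mul_left (a := p ^ 2) ?_
  calc p ^ 2 * (a * q) = a * (p ^ 2 * q) := by ring
    _ < a * p ^ 3 := by
        refine mul_lt_mul_of_pos_left ?_ (lt_of_lt_of_le (by positivity) ha)
        rw [pow_succ]
        exact mul_lt_mul_of_pos_left hqp (by positivity)
    _ ≤ a * a := by gcongr
    _ ≤ p * #s * a := by gcongr
    _ ≤ p ^ 2 * ∑ i ∈ s, f i := by rw [sq, mul_assoc, mul_assoc]; gcongr

theorem nonabelian_Pgroup_large_rank_not_mem_C3_general (p q n : ℕ) (hp : p.Prime) (hq : q.Prime)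
    (hdvd : q ∣ p - 1) (hn : 4 ≤ n)
    (G : Type*) [Group G] [Finite G] (hG : Nat.card G = p ^ (n - 1) * q)
    (H : Subgroup G) (hHcard : Nat.card H = p ^ (n - 1))
    (hHel : ∀ x ∈ H, x ^ p = 1)
    (K : Subgroup G) (hcompl : H.IsComplement' K)
    (hpow : ∀ k ∈ K, ∃ m : ℕ, ∀ x ∈ H, k * x * k⁻¹ = x ^ m)
    (hnontriv : ∃ k ∈ K, ∃ x ∈ H, k * x * k⁻¹ ≠ x) :
    2 * Nat.card G < normalSum G := by
  classical
  have : Fact p.Prime := ⟨hp⟩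
  obtain ⟨k, hk, hne⟩ := hnontriv
  obtain ⟨m, hm⟩ := hpow k hk
  have : IsMulCommutative H := H.isMulCommutative_of_conj_eq_pow hp hHcard hHel hm hne
  have hconj := H.exists_conj_eq_pow_of_isComplement' hcompl hpow
  obtain ⟨S, hS, hSH⟩ := H.exists_finset_le_of_pow_eq_one hHel
  have hqp : q < p := by
    have := hp.two_le
    have := Nat.le_of_dvd (by omega) hdvd
    omega
  have htop : ⊤ ∉ S := fun htop => by
    have := Subgroup.card_le_of_le (hSH ⊤ htop).1
    rw [Subgroup.card_top, hG, hHcard] at this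
    nlinarith [hq.two_le, pow_pos hp.pos (n - 1)]
  have hlt : Nat.card G < ∑ N ∈ S, Nat.card N :=
    hG ▸ mul_lt_sum_of_le_mul hqp (Nat.pow_le_pow_right hp.pos (by omega)) (hHcard ▸ hS)
      fun N hN => hHcard ▸ (hSH N hN).2
  calc 2 * Nat.card G < Nat.card G + ∑ N ∈ S, Nat.card N := by omega
    _ ≤ normalSum G := card_add_sum_card_le_normalSum S
          (fun N hN => Subgroup.normal_of_le_of_conj_eq_pow hconj (hSH N hN).1) htop

theorem nonabelian_Pgroup_large_rank_not_mem_C3 (p q n : ℕ) (hp : p.Prime) (hq : q.Prime)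
    (hodd : Odd p) (hdvd : q ∣ p - 1) (hn : 4 ≤ n)
    (G : Type*) [Group G] [Finite G] (hG : Nat.card G = p ^ (n - 1) * q)
    (H : Subgroup G) (hHn : H.Normal) (hHcard : Nat.card H = p ^ (n - 1))
    (hHel : ∀ x ∈ H, x ^ p = 1)
    (K : Subgroup G) (hKcard : Nat.card K = q) (hcompl : H.IsComplement' K)
    (hpow : ∀ k ∈ K, ∃ m : ℕ, ∀ x ∈ H, k * x * k⁻¹ = x ^ m)
    (hnontriv : ∃ k ∈ K, ∃ x ∈ H, k * x * k⁻¹ ≠ x) :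
    2 * Nat.card G < normalSum G :=
  nonabelian_Pgroup_large_rank_not_mem_C3_general p q n hp hq hdvd hn G hG H hHcard hHel K hcompl
    hpow hnontriv
end

section
/- Let E be an elementary abelian p-group of rank m ≥ 3 (p prime). Then ∑_{H ≤ E} |H| > p^{m+1}. -/
/-!
Regard `E` as an `𝔽_p`-vector space `V` of dimension `m` and fix `x ≠ 0`. The functionals `f`
with `f x = 1` form a coset of a hyperplane of the dual space, so there are `p ^ (m - 1)` of them,
and distinct ones have distinct kernels. This gives `p ^ (m - 1)` hyperplanes of order
`p ^ (m - 1)`, contributing `p ^ (2m - 2) ≥ p ^ (m + 1)` to the sum, and `V` itself adds `p ^ m`.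
-/

open Module LinearMap

namespace Module.Dual

variable {K V : Type*} [Field K] [AddCommGroup V] [Module K V] [FiniteDimensional K V]

theorem natCard_ker_of_ne_zero {f : Dual K V} (hf : f ≠ 0) :
    Nat.card (ker f) = Nat.card K ^ (finrank K V - 1) := by
  rw [natCard_eq_pow_finrank (K := K), ← finrank_ker_add_one_of_ne_zero hf, Nat.add_sub_cancel]

theorem natCard_subtype_apply_eq_one {x : V} (hx : x ≠ 0) :
    Nat.card {f : Dual K V // f x = 1} = Nat.card K ^ (finrank K V - 1) := by
  obtain ⟨f₀, hf₀⟩ := Projective.exists_dual_eq_one K hx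
  have hx' : Dual.eval K V x ≠ 0 := by
    rwa [ne_eq, eval_apply_eq_zero_iff]
  calc Nat.card {f : Dual K V // f x = 1} = Nat.card (ker (Dual.eval K V x)) :=
        Nat.card_congr ((Equiv.subRight f₀).subtypeEquiv fun f => by simp [sub_eq_zero, hf₀])
    _ = _ := by rw [natCard_ker_of_ne_zero hx', Subspace.dual_finrank_eq]

theorem ker_injOn_apply_eq_one (x : V) : Set.InjOn (fun f : Dual K V => ker f) {f | f x = 1} :=
  fun _ hf _ hg h => eq_of_ker_eq_of_apply_eq x h (hf.trans hg.symm) (by rw [hf]; exact one_ne_zero)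

end Module.Dual

section

variable {K V : Type*} [Field K] [Finite K] [AddCommGroup V] [Module K V] [Finite V]

theorem pow_finrank_add_sq_le_finsum_natCard_submodule (hV : 0 < finrank K V) :
    Nat.card K ^ finrank K V + (Nat.card K ^ (finrank K V - 1)) ^ 2 ≤
      ∑ᶠ W : Submodule K V, Nat.card W := by
  classical
  have := Fintype.ofFinite (Submodule K V)
  have := Module.finite_of_finite K (M := Dual K V)
  have := Fintype.ofFinite (Dual K V)
  have := finrank_pos_iff.mp hV
  obtain ⟨x, hx⟩ := exists_ne (0 : V)
  set S : Finset (Dual K V) := {f | f x = 1}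
  have hS : S.card = Nat.card K ^ (finrank K V - 1) := by
    rw [← Dual.natCard_subtype_apply_eq_one hx, Nat.card_eq_fintype_card, Fintype.card_subtype]
  have hS0 : ∀ f ∈ S, f ≠ 0 := fun f hf h0 => by simp [S, h0] at hf
  have htop : ⊤ ∉ S.image ker := by
    simp only [Finset.mem_image, ker_eq_top, not_exists, not_and]
    exact hS0
  rw [finsum_eq_sum_of_fintype]
  calc Nat.card K ^ finrank K V + (Nat.card K ^ (finrank K V - 1)) ^ 2
      = Nat.card (⊤ : Submodule K V) + ∑ f ∈ S, Nat.card (ker f) := by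
        rw [Finset.sum_congr rfl fun f hf => Dual.natCard_ker_of_ne_zero (hS0 f hf),
          Finset.sum_const, hS, smul_eq_mul, Nat.card_congr Submodule.topEquiv.toEquiv,
          ← natCard_eq_pow_finrank (K := K) (V := V), sq]
    _ = ∑ W ∈ insert ⊤ (S.image ker), Nat.card W := by
        rw [Finset.sum_insert htop, Finset.sum_image]
        exact fun f hf g hg =>
          Dual.ker_injOn_apply_eq_one x (by simpa [S] using hf) (by simpa [S] using hg)
    _ ≤ _ := Finset.sum_le_sum_of_subset (Finset.subset_univ _)

theorem pow_add_one_lt_finsum_natCard_submodule {n : ℕ} (hV : Nat.card V = Nat.card K ^ n)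
    (hn : 3 ≤ n) : Nat.card K ^ (n + 1) < ∑ᶠ W : Submodule K V, Nat.card W := by
  obtain rfl : finrank K V = n :=
    Nat.pow_right_injective Finite.one_lt_card (natCard_eq_pow_finrank.symm.trans hV)
  have hK : 0 < Nat.card K := Nat.card_pos
  calc Nat.card K ^ (finrank K V + 1) ≤ (Nat.card K ^ (finrank K V - 1)) ^ 2 := by
        rw [← pow_mul]; exact Nat.pow_le_pow_right hK (by omega)
    _ < Nat.card K ^ finrank K V + (Nat.card K ^ (finrank K V - 1)) ^ 2 :=
        Nat.lt_add_of_pos_left (pow_pos hK _)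
    _ ≤ _ := pow_finrank_add_sq_le_finsum_natCard_submodule (by omega)

end

theorem finsum_natCard_subgroup_eq_finsum_natCard_submodule {n : ℕ} {E : Type*} [CommGroup E]
    [Module (ZMod n) (Additive E)] :
    ∑ᶠ H : Subgroup E, Nat.card H = ∑ᶠ W : Submodule (ZMod n) (Additive E), Nat.card W :=
  finsum_comp_equiv
    (Subgroup.toAddSubgroup.trans (AddSubgroup.toZModSubmodule (M := Additive E) n)).toEquiv
    (f := fun W : Submodule (ZMod n) (Additive E) => Nat.card W)

theorem elementaryAbelian_rank_ge_three_subgroup_sum (p m : ℕ) (hp : p.Prime) (hm : 3 ≤ m)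
    (E : Type*) [CommGroup E] [Finite E] (hcard : Nat.card E = p ^ m)
    (hel : ∀ x : E, x ^ p = 1) :
    p ^ (m + 1) < ∑ᶠ H : Subgroup E, Nat.card H := by
  have := Fact.mk hp
  let _ : Module (ZMod p) (Additive E) := AddCommGroup.zmodModule fun x => hel x.toMul
  have key := pow_add_one_lt_finsum_natCard_submodule (K := ZMod p) (V := Additive E)
    (by rwa [Nat.card_zmod]) hm
  rwa [Nat.card_zmod, ← finsum_natCard_subgroup_eq_finsum_natCard_submodule] at key
end

section
/- Let G = ⟨x, y | x^k = y^m = 1, y^x = y^n⟩ with gcd(m, n−1) = 1, m dividing (n^k − 1)/(n − 1), and k prime. If H is a normal subgroup of G not contained in ⟨y⟩, then H = G. -/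
theorem metacyclic_normal_not_le_cyclic_eq_top (k m n : ℕ) (hk : k.Prime)
    (hgcd : Nat.gcd m (n - 1) = 1) (hdvd : m ∣ (n ^ k - 1) / (n - 1))
    (G : Type*) [Group G] [Finite G] (x y : G)
    (hgen : Subgroup.closure {x, y} = ⊤)
    (hx : x ^ k = 1) (hy : orderOf y = m)
    (hconj : x * y * x⁻¹ = y ^ n)
    (hcard : Nat.card G = k * m)
    (H : Subgroup G) (hH : H.Normal) (hnle : ¬ H ≤ Subgroup.zpowers y) :
    H = ⊤ := by
  set N := Subgroup.zpowers y with hN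
  have hm : 0 < m := hy ▸ orderOf_pos y
  have hk0 : 0 < k := hk.pos
  have hym : y ^ m = 1 := hy ▸ pow_orderOf_eq_one y
  -- conjugation by powers of x
  have key : ∀ j : ℕ, x ^ j * y * (x ^ j)⁻¹ = y ^ (n ^ j) := by
    intro j
    induction j with
    | zero => simp
    | succ j ih =>
      have h1 : x ^ (j+1) * y * (x ^ (j+1))⁻¹ = x * (x ^ j * y * (x ^ j)⁻¹) * x⁻¹ := by
        group
      rw [h1, ih, ← conj_pow, hconj, ← pow_mul, ← pow_succ']
  -- x⁻¹ = x ^ (k-1)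
  have hxinv : x⁻¹ = x ^ (k - 1) := by
    have h1 : x * x ^ (k - 1) = 1 := by
      rw [← pow_succ', show k - 1 + 1 = k by omega, hx]
    exact inv_eq_of_mul_eq_one_right h1
  -- N is normal
  have hNnormal : N.Normal := by
    rw [← Subgroup.normalizer_eq_top_iff, ← top_le_iff, ← hgen, Subgroup.closure_le]
    refine Set.insert_subset_iff.mpr ⟨?_, Set.singleton_subset_iff.mpr ?_⟩
    · rw [SetLike.mem_coe, Subgroup.mem_normalizer_iff]
      intro h
      constructor
      · intro hh
        obtain ⟨t, ht⟩ := Subgroup.mem_zpowers_iff.mp hh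
        rw [Subgroup.mem_zpowers_iff]
        refine ⟨(n : ℤ) * t, ?_⟩
        rw [zpow_mul, zpow_natCast, ← hconj, conj_zpow, ht]
      · intro hh
        obtain ⟨t, ht⟩ := Subgroup.mem_zpowers_iff.mp hh
        have h2 : h = x⁻¹ * y ^ t * x := by
          rw [ht]; group
        rw [Subgroup.mem_zpowers_iff]
        refine ⟨(n : ℤ) ^ (k - 1) * t, ?_⟩
        have h3 : x⁻¹ * y ^ t * x = (x⁻¹ * y * x) ^ t := by
          rw [show x⁻¹ * y * x = x⁻¹ * y * x⁻¹⁻¹ by rw [inv_inv], conj_zpow, inv_inv]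
        have h4 : x⁻¹ * y * x = y ^ (n ^ (k - 1)) := by
          rw [hxinv, ← key (k - 1)]
          congr 1
          rw [← hxinv]; group
        rw [h2, h3, h4, ← zpow_natCast, ← zpow_mul, Nat.cast_pow]
    · rw [SetLike.mem_coe]
      exact Subgroup.le_normalizer (Subgroup.mem_zpowers y)
  -- H ⊔ N = ⊤ by cardinality
  have hcardN : Nat.card N = m := by rw [hN, Nat.card_zpowers, hy]
  have hsub : N ≤ H ⊔ N := le_sup_right
  obtain ⟨t, ht⟩ : Nat.card N ∣ Nat.card (H ⊔ N : Subgroup G) :=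
    Subgroup.card_dvd_of_le hsub
  rw [hcardN] at ht
  have htk : t ∣ k := by
    have h5 : m * t ∣ m * k := by
      rw [← ht, Nat.mul_comm m k, ← hcard]
      exact Subgroup.card_subgroup_dvd_card _
    exact (Nat.mul_dvd_mul_iff_left hm).mp h5
  have ht1 : t ≠ 1 := by
    intro h1
    apply hnle
    have h2 : N = H ⊔ N := by
      apply Subgroup.eq_of_le_of_card_ge hsub
      rw [ht, h1, Nat.mul_one, hcardN]
    exact h2 ▸ le_sup_left
  have htop : H ⊔ N = ⊤ := by
    apply Subgroup.eq_top_of_card_eq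
    rw [ht, hcard, (hk.eq_one_or_self_of_dvd t htk).resolve_left ht1, Nat.mul_comm]
  -- x = h * a with h ∈ H, a ∈ N
  have hxmem : x ∈ (↑(H ⊔ N) : Set G) := by rw [htop]; trivial
  rw [Subgroup.mul_normal] at hxmem
  obtain ⟨h, hh, a, ha, hha⟩ := hxmem
  obtain ⟨s, rfl⟩ := ha
  -- the commutator y^n * y⁻¹ lies in H
  have hcomm : y ^ n * y⁻¹ ∈ H := by
    have h1 : y ^ n * y⁻¹ = h * (y * h⁻¹ * y⁻¹) := by
      rw [← hconj, ← hha]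
      have h2 : y ^ s * y = y * y ^ s := by
        rw [← zpow_one_add, ← zpow_add_one]; ring_nf
      calc h * y ^ s * y * (h * y ^ s)⁻¹ * y⁻¹
          = h * (y ^ s * y) * (y ^ s)⁻¹ * h⁻¹ * y⁻¹ := by group
        _ = h * (y * h⁻¹ * y⁻¹) := by rw [h2]; group
    rw [h1]
    exact H.mul_mem hh (by simpa using hH.conj_mem h⁻¹ (H.inv_mem hh) y)
  -- y ∈ H via Bezout
  have hyH : y ∈ H := by
    rcases Nat.eq_zero_or_pos n with hn0 | hn
    · have : y = 1 := by
        have h1 : x * y * x⁻¹ = 1 := by rw [hconj, hn0, pow_zero]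
        have h2 : y = x⁻¹ * (x * y * x⁻¹) * x := by group
        rw [h2, h1]; group
      rw [this]; exact H.one_mem
    · have hz : y ^ ((n : ℤ) - 1) ∈ H := by
        have : y ^ ((n : ℤ) - 1) = y ^ n * y⁻¹ := by
          rw [zpow_sub, zpow_one, zpow_natCast]
        rw [this]; exact hcomm
      have hcast : ((n - 1 : ℕ) : ℤ) = (n : ℤ) - 1 := by
        omega
      have hbez : (1 : ℤ) = m * Nat.gcdA m (n - 1) + ((n : ℤ) - 1) * Nat.gcdB m (n - 1) := by
        rw [← hcast, ← Nat.gcd_eq_gcd_ab, hgcd]; norm_num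
      have : y = (y ^ (m : ℤ)) ^ Nat.gcdA m (n - 1) *
          (y ^ ((n : ℤ) - 1)) ^ Nat.gcdB m (n - 1) := by
        rw [← zpow_mul, ← zpow_mul, ← zpow_add, ← hbez, zpow_one]
      rw [this]
      have hym' : y ^ (m : ℤ) = 1 := by rw [zpow_natCast, hym]
      rw [hym', one_zpow, one_mul]
      exact H.zpow_mem hz _
  -- conclude
  have hxH : x ∈ H := by
    rw [← hha]
    exact H.mul_mem hh (H.zpow_mem hyH s)
  rw [← top_le_iff, ← hgen, Subgroup.closure_le]
  exact Set.insert_subset_iff.mpr ⟨hxH, Set.singleton_subset_iff.mpr hyH⟩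
end

section
/- Let G = ⟨x, y | x^k = y^m = 1, y^x = y^n⟩ with gcd(m, n−1) = 1, m dividing (n^k − 1)/(n − 1), and k prime. Then G belongs to C₃ (∑_{H ⊴ G} |H| ≤ 2|G|) if and only if σ(m) ≤ km. -/
namespace Subgroup

variable {G : Type*} [Group G]

/-- In a finite group the submonoid generated by `s` is the whole subgroup it generates. -/
theorem normal_of_conj_mem_of_closure_eq_top [Finite G] {s : Set G} (hs : closure s = ⊤)
    {H : Subgroup G} (h : ∀ g ∈ s, ∀ a ∈ H, g * a * g⁻¹ ∈ H) : H.Normal := by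
  refine ⟨fun a ha g => ?_⟩
  have hg : g ∈ Submonoid.closure s := by
    rw [← closure_toSubmonoid_of_finite, hs]; trivial
  induction hg using Submonoid.closure_induction generalizing a with
  | mem g hg => exact h g hg a ha
  | one => simpa using ha
  | mul g g' _ _ ihg ihg' => simpa [mul_assoc] using ihg _ (ihg' a ha)

theorem sup_eq_top_of_not_le {H K : Subgroup G} [K.Normal] (hK : (Nat.card (G ⧸ K)).Prime)
    (hH : ¬ H ≤ K) : H ⊔ K = ⊤ := by
  have := Fact.mk hK
  obtain h | h := (H.map (QuotientGroup.mk' K)).eq_bot_or_eq_top_of_prime_card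
  · rw [map_eq_bot_iff, QuotientGroup.ker_mk'] at h
    exact absurd h hH
  · rw [← QuotientGroup.ker_mk' K, ← comap_map_eq, h, comap_top]

theorem mem_of_conj_eq_pow {H : Subgroup G} [H.Normal] {h y : G} {n : ℕ}
    (hcop : (orderOf y).Coprime (n - 1)) (hh : h ∈ H) (hconj : h * y * h⁻¹ = y ^ n) :
    y ∈ H := by
  have hcomm : y ^ n * y⁻¹ ∈ H := by
    rw [← hconj, mul_assoc, mul_assoc, ← mul_assoc y]
    exact H.mul_mem hh (Normal.conj_mem inferInstance _ (H.inv_mem hh) y)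
  rcases n with _ | n
  · simpa using hcomm
  · rw [pow_succ, mul_inv_cancel_right] at hcomm
    obtain ⟨e, he⟩ := exists_pow_eq_self_of_coprime (by simpa using hcop.symm)
    rw [← he]
    exact H.pow_mem hcomm e

theorem mem_zpowers_pow_div_of_pow_eq_one {y g : G} {d : ℕ} (hd : d ∣ orderOf y) (hd0 : d ≠ 0)
    (hg : g ∈ zpowers y) (hgd : g ^ d = 1) : g ∈ zpowers (y ^ (orderOf y / d)) := by
  obtain ⟨j, rfl⟩ := mem_zpowers_iff.1 hg
  have hdvd : ((orderOf y / d : ℕ) : ℤ) * d ∣ j * d := by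
    rw [← Nat.cast_mul, Nat.div_mul_cancel hd]
    exact orderOf_dvd_iff_zpow_eq_one.2 (by rw [zpow_mul, zpow_natCast, hgd])
  obtain ⟨c, rfl⟩ := Int.dvd_of_mul_dvd_mul_right (by exact_mod_cast hd0) hdvd
  exact ⟨c, by simp only [← zpow_natCast, ← zpow_mul]⟩

theorem card_zpowers_pow_div {y : G} {d : ℕ} (hy : orderOf y ≠ 0) (hd : d ∣ orderOf y) :
    Nat.card (zpowers (y ^ (orderOf y / d))) = d := by
  rw [Nat.card_zpowers, orderOf_pow_orderOf_div hy hd]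

theorem eq_zpowers_pow_div_of_le_zpowers [Finite G] {y : G} {H : Subgroup G}
    (hH : H ≤ zpowers y) : H = zpowers (y ^ (orderOf y / Nat.card H)) := by
  have hd : Nat.card H ∣ orderOf y := Nat.card_zpowers y ▸ card_dvd_of_le hH
  refine eq_of_le_of_card_ge (fun g hg => ?_) (card_zpowers_pow_div (orderOf_pos y).ne' hd).le
  refine mem_zpowers_pow_div_of_pow_eq_one hd Nat.card_pos.ne' (hH hg) ?_
  exact orderOf_dvd_iff_pow_eq_one.1 (H.orderOf_dvd_natCard hg)

theorem setOf_le_zpowers_eq_image [Finite G] (y : G) :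
    {H : Subgroup G | H ≤ zpowers y} =
      (fun d => zpowers (y ^ (orderOf y / d))) '' (orderOf y).divisors := by
  ext H
  refine ⟨fun hH => ⟨Nat.card H, ?_, (eq_zpowers_pow_div_of_le_zpowers hH).symm⟩, ?_⟩
  · exact Nat.mem_divisors.2 ⟨Nat.card_zpowers y ▸ card_dvd_of_le hH, (orderOf_pos y).ne'⟩
  · rintro ⟨d, -, rfl⟩
    exact zpowers_le.2 (pow_mem (mem_zpowers y) _)

theorem finsum_card_le_zpowers [Finite G] (y : G) :
    ∑ᶠ H ∈ {H : Subgroup G | H ≤ zpowers y}, Nat.card H = ∑ d ∈ (orderOf y).divisors, d := by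
  have hinj : Set.InjOn (fun d => zpowers (y ^ (orderOf y / d))) (orderOf y).divisors :=
    fun d hd d' hd' h => by
      dsimp only at h
      rw [← card_zpowers_pow_div (orderOf_pos y).ne' (Nat.dvd_of_mem_divisors hd), h,
        card_zpowers_pow_div (orderOf_pos y).ne' (Nat.dvd_of_mem_divisors hd')]
  rw [setOf_le_zpowers_eq_image, finsum_mem_image hinj, ← finsum_mem_coe_finset]
  exact finsum_mem_congr rfl fun d hd =>
    card_zpowers_pow_div (orderOf_pos y).ne' (Nat.dvd_of_mem_divisors hd)

theorem normal_of_le_zpowers [Finite G] {x y : G} {n : ℕ} (hgen : closure {x, y} = ⊤)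
    (hconj : x * y * x⁻¹ = y ^ n) {H : Subgroup G} (hH : H ≤ zpowers y) : H.Normal := by
  refine normal_of_conj_mem_of_closure_eq_top hgen fun g hg a ha => ?_
  obtain ⟨j, rfl⟩ := mem_zpowers_iff.1 (hH ha)
  rcases hg with rfl | rfl
  · rw [← conj_zpow, hconj, ← zpow_natCast, ← zpow_mul, mul_comm, zpow_mul, zpow_natCast]
    exact H.pow_mem ha n
  · rwa [((Commute.refl _).zpow_right j).eq, mul_inv_cancel_right]

theorem eq_top_of_normal_of_not_le_zpowers [Finite G] {x y : G} {n : ℕ}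
    (hgen : closure {x, y} = ⊤) (hconj : x * y * x⁻¹ = y ^ n) (hcop : (orderOf y).Coprime (n - 1))
    (hprime : (Nat.card (G ⧸ zpowers y)).Prime) {H : Subgroup G} [H.Normal]
    (hH : ¬ H ≤ zpowers y) : H = ⊤ := by
  have := normal_of_le_zpowers hgen hconj le_rfl
  obtain ⟨h, hh, z, hz, rfl⟩ :=
    mem_sup_of_normal_right.1 (sup_eq_top_of_not_le hprime hH ▸ mem_top x)
  have hzy : Commute z y := by
    obtain ⟨j, rfl⟩ := mem_zpowers_iff.1 hz
    exact (Commute.refl y).zpow_left j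
  have hy : y ∈ H := mem_of_conj_eq_pow hcop hh <| by
    rw [← hconj, show h * z * y * (h * z)⁻¹ = h * (z * y * z⁻¹) * h⁻¹ by group, hzy.eq,
      mul_inv_cancel_right]
  have hzH : z ∈ H := zpowers_le.2 hy hz
  rw [eq_top_iff, ← hgen, closure_le, Set.insert_subset_iff, Set.singleton_subset_iff]
  exact ⟨H.mul_mem hh hzH, hy⟩

theorem normal_iff_eq_top_or_le_zpowers [Finite G] {x y : G} {n : ℕ}
    (hgen : closure {x, y} = ⊤) (hconj : x * y * x⁻¹ = y ^ n) (hcop : (orderOf y).Coprime (n - 1))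
    (hprime : (Nat.card (G ⧸ zpowers y)).Prime) (H : Subgroup G) :
    H.Normal ↔ H = ⊤ ∨ H ≤ zpowers y := by
  refine ⟨fun _ => ?_, ?_⟩
  · exact or_iff_not_imp_right.2 (eq_top_of_normal_of_not_le_zpowers hgen hconj hcop hprime)
  · rintro (rfl | hH)
    · exact normal_top
    · exact normal_of_le_zpowers hgen hconj hH

end Subgroup

open Subgroup in
theorem normalSum_eq_card_add_sum_divisors {G : Type*} [Group G] [Finite G] {y : G}
    (hnormal : ∀ H : Subgroup G, H.Normal ↔ H = ⊤ ∨ H ≤ zpowers y) (htop : zpowers y ≠ ⊤) :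
    normalSum G = Nat.card G + ∑ d ∈ (orderOf y).divisors, d := by
  have hfin : {H : Subgroup G | H ≤ zpowers y}.Finite := by
    rw [setOf_le_zpowers_eq_image]
    exact (Finset.finite_toSet _).image _
  change ∑ᶠ H ∈ {H : Subgroup G | H.Normal}, Nat.card H = _
  rw [Set.ext hnormal, Set.ofPred_or, Set.ofPred_eq_eq_singleton, Set.singleton_union,
    finsum_mem_insert _ (fun h => htop (top_le_iff.1 h)) hfin, card_top, finsum_card_le_zpowers]

theorem metacyclic_mem_C3_iff_general (k m n : ℕ) (hk : k.Prime)
    (hgcd : Nat.gcd m (n - 1) = 1)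
    (G : Type*) [Group G] [Finite G] (x y : G)
    (hgen : Subgroup.closure {x, y} = ⊤)
    (hy : orderOf y = m)
    (hconj : x * y * x⁻¹ = y ^ n)
    (hcard : Nat.card G = k * m) :
    normalSum G ≤ 2 * Nat.card G ↔ (∑ d ∈ m.divisors, d) ≤ k * m := by
  subst hy
  have hquot : Nat.card (G ⧸ Subgroup.zpowers y) = k := by
    have := (Subgroup.zpowers y).card_eq_card_quotient_mul_card_subgroup
    rw [hcard, Nat.card_zpowers] at this
    exact (Nat.eq_of_mul_eq_mul_right (orderOf_pos y) this).symm
  have htop : Subgroup.zpowers y ≠ ⊤ := fun h => by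
    have := Nat.card_zpowers y
    rw [h, Subgroup.card_top, hcard] at this
    nlinarith [hk.two_le, orderOf_pos y]
  rw [normalSum_eq_card_add_sum_divisors
    (Subgroup.normal_iff_eq_top_or_le_zpowers hgen hconj hgcd (hquot ▸ hk)) htop, hcard]
  omega

theorem metacyclic_mem_C3_iff (k m n : ℕ) (hk : k.Prime)
    (hgcd : Nat.gcd m (n - 1) = 1) (hdvd : m ∣ (n ^ k - 1) / (n - 1))
    (G : Type*) [Group G] [Finite G] (x y : G)
    (hgen : Subgroup.closure {x, y} = ⊤)
    (hx : x ^ k = 1) (hy : orderOf y = m)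
    (hconj : x * y * x⁻¹ = y ^ n)
    (hcard : Nat.card G = k * m) :
    normalSum G ≤ 2 * Nat.card G ↔ (∑ d ∈ m.divisors, d) ≤ k * m :=
  metacyclic_mem_C3_iff_general k m n hk hgcd G x y hgen hy hconj hcard
end

section
/- If G is a finite group whose normal subgroup lattice is a chain (i.e. normal subgroups are totally ordered by inclusion), then G belongs to C₃, i.e. ∑_{H ⊴ G} |H| ≤ 2|G|. -/
lemma chain_div_sum_le : ∀ (S : Finset ℕ) (n : ℕ),
    (∀ a ∈ S, 0 < a) → (∀ a ∈ S, ∀ b ∈ S, a ∣ b ∨ b ∣ a) → (∀ a ∈ S, a ≤ n) →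
    ∑ x ∈ S, x ≤ 2 * n := by
  intro S
  induction S using Finset.strongInduction with
  | _ S ih =>
    intro n hpos hchain hb
    rcases S.eq_empty_or_nonempty with rfl | hne
    · simp
    · set m := S.max' hne with hm
      have hmS : m ∈ S := S.max'_mem hne
      have hsub : S.erase m ⊂ S := Finset.erase_ssubset hmS
      have hrest : ∑ x ∈ S.erase m, x ≤ 2 * (m / 2) := by
        apply ih _ hsub
        · exact fun a ha => hpos a (Finset.mem_of_mem_erase ha)
        · exact fun a ha b hb' => hchain a (Finset.mem_of_mem_erase ha) b (Finset.mem_of_mem_erase hb')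
        · intro a ha
          have haS := Finset.mem_of_mem_erase ha
          have hanem : a ≠ m := Finset.ne_of_mem_erase ha
          have halem : a ≤ m := S.le_max' a haS
          have hadvd : a ∣ m := by
            rcases hchain a haS m hmS with h | h
            · exact h
            · exact absurd (le_antisymm halem (Nat.le_of_dvd (hpos a haS) h)) hanem
          obtain ⟨c, hc⟩ := hadvd
          have hc2 : 2 ≤ c := by
            rcases Nat.lt_or_ge c 2 with h | h
            · interval_cases c
              · exact absurd hc (by have := hpos m hmS; omega)
              · exact absurd hc.symm (by simpa using hanem)
            · exact h
          have : 2 * a ≤ m := by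
            calc 2 * a ≤ c * a := Nat.mul_le_mul_right a hc2
            _ = m := by rw [hc, mul_comm]
          omega
      have h2 : 2 * (m / 2) ≤ m := Nat.mul_div_le m 2 |>.trans_eq rfl
      have hmn : m ≤ n := hb m hmS
      calc ∑ x ∈ S, x = m + ∑ x ∈ S.erase m, x := (Finset.add_sum_erase S id hmS).symm
      _ ≤ m + 2 * (m / 2) := by omega
      _ ≤ m + m := by omega
      _ ≤ 2 * n := by omega

theorem mem_C3_of_normal_chain (G : Type*) [Group G] [Finite G]
    (hchain : ∀ H K : Subgroup G, H.Normal → K.Normal → H ≤ K ∨ K ≤ H) :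
    normalSum G ≤ 2 * Nat.card G := by
  classical
  have : Fintype G := Fintype.ofFinite G
  have : Fintype (Subgroup G) := Fintype.ofFinite _
  set T : Finset (Subgroup G) := Finset.univ.filter (fun H => H.Normal) with hT
  have h1 : normalSum G = ∑ H ∈ T, Nat.card H := by
    apply finsum_cond_eq_sum_of_cond_iff
    intro H _
    simp [hT]
  have hmemT : ∀ H ∈ T, H.Normal := by
    intro H hH
    simpa [hT] using hH
  have hinj : ∀ x ∈ T, ∀ y ∈ T, Nat.card x = Nat.card y → x = y := by
    intro x hx y hy hcard
    rcases hchain x y (hmemT x hx) (hmemT y hy) with h | h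
    · exact Subgroup.eq_of_le_of_card_ge h hcard.ge
    · exact (Subgroup.eq_of_le_of_card_ge h hcard.le).symm
  have h2 : ∑ x ∈ T.image (fun H : Subgroup G => Nat.card H), x = ∑ H ∈ T, Nat.card H :=
    Finset.sum_image hinj
  rw [h1, ← h2]
  apply chain_div_sum_le
  · intro a ha
    obtain ⟨H, _, rfl⟩ := Finset.mem_image.mp ha
    exact Nat.card_pos
  · intro a ha b hb
    obtain ⟨H, hH, rfl⟩ := Finset.mem_image.mp ha
    obtain ⟨K, hK, rfl⟩ := Finset.mem_image.mp hb
    rcases hchain H K (hmemT H hH) (hmemT K hK) with h | h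
    · exact Or.inl (Subgroup.card_dvd_of_le h)
    · exact Or.inr (Subgroup.card_dvd_of_le h)
  · intro a ha
    obtain ⟨H, _, rfl⟩ := Finset.mem_image.mp ha
    exact Nat.le_of_dvd Nat.card_pos (Subgroup.card_subgroup_dvd_card H)
end
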